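/- arXiv:1604.02189 — 3 statements merged into one kernel-verified Lean document; each statement's English description precedes it below -/
import Mathlib

section
/- Let ρ be a positive semidefinite operator on ℂ^{d} ⊗ ℂ^{d} and 0 < δ < 1/8. Suppose N_δ is a δ-net of the unit sphere of ℂ^d in norm. Define M(ρ) = sup over unit vectors x,y of ⟨x⊗y|ρ|x⊗y⟩ and M_δ(ρ) = max over x,y ∈ N_δ of ⟨x⊗y|ρ|x⊗y⟩. Then M_δ(ρ) ≥ (1 − 4δ) M(ρ). -/
open Matrix
open scoped ComplexOrder

/-!
Write `ρ = B†B`. Then `⟨x⊗y|ρ|x⊗y⟩ = ‖Φ x y‖²` for the bounded bilinear map `Φ x y = B (x ⊗ y)`,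
and `‖Φ‖² ≤ M(ρ)`. If `x̄, ȳ` are net points within `δ` of unit vectors `x, y`, bilinearity gives
`‖Φ x y‖ - ‖Φ x̄ ȳ‖ ≤ ‖Φ (x - x̄) y‖ + ‖Φ x̄ (y - ȳ)‖ ≤ 2δ‖Φ‖`; as both norms are at most `‖Φ‖`,
`‖Φ x y‖² ≤ ‖Φ x̄ ȳ‖² + 4δ‖Φ‖² ≤ M_δ(ρ) + 4δ M(ρ)`, and taking the supremum over `x, y` gives
`M(ρ) ≤ M_δ(ρ) + 4δ M(ρ)`.
-/

namespace ContinuousLinearMap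

variable {𝕜 E F G : Type*} [RCLike 𝕜] [NormedAddCommGroup E] [NormedSpace 𝕜 E]
  [NormedAddCommGroup F] [NormedSpace 𝕜 F] [NormedAddCommGroup G] [NormedSpace 𝕜 G]
  (Φ : E →L[𝕜] F →L[𝕜] G)

theorem opNorm_le_of_unit_norm₂ {C : ℝ} (hC : 0 ≤ C)
    (h : ∀ x y, ‖x‖ = 1 → ‖y‖ = 1 → ‖Φ x y‖ ≤ C) : ‖Φ‖ ≤ C :=
  opNorm_le_of_unit_norm hC fun x hx ↦ opNorm_le_of_unit_norm hC fun y hy ↦ h x y hx hy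

theorem sq_norm_apply_le_of_norm_sub_le {δ : ℝ} {x x' : E} {y y' : F}
    (hx : ‖x‖ ≤ 1) (hx' : ‖x'‖ ≤ 1) (hy : ‖y‖ ≤ 1) (hy' : ‖y'‖ ≤ 1)
    (hxx' : ‖x - x'‖ ≤ δ) (hyy' : ‖y - y'‖ ≤ δ) :
    ‖Φ x y‖ ^ 2 ≤ ‖Φ x' y'‖ ^ 2 + 4 * δ * ‖Φ‖ ^ 2 := by
  have hδ : 0 ≤ δ := (norm_nonneg _).trans hxx'
  have ha : ‖Φ x y‖ ≤ ‖Φ‖ := by simpa using Φ.le_of_opNorm₂_le_of_le le_rfl hx hy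
  have hb : ‖Φ x' y'‖ ≤ ‖Φ‖ := by simpa using Φ.le_of_opNorm₂_le_of_le le_rfl hx' hy'
  have hsplit : Φ x y - Φ x' y' = Φ (x - x') y + Φ x' (y - y') := by simp
  have hdiff : ‖Φ x y‖ - ‖Φ x' y'‖ ≤ 2 * δ * ‖Φ‖ :=
    calc ‖Φ x y‖ - ‖Φ x' y'‖ ≤ ‖Φ (x - x') y + Φ x' (y - y')‖ :=
          hsplit ▸ norm_sub_norm_le _ _
      _ ≤ ‖Φ‖ * δ * 1 + ‖Φ‖ * 1 * δ :=
          norm_add_le_of_le (Φ.le_of_opNorm₂_le_of_le le_rfl hxx' hy)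
            (Φ.le_of_opNorm₂_le_of_le le_rfl hx' hyy')
      _ = 2 * δ * ‖Φ‖ := by ring
  -- `a² - b² = (a - b)(a + b)` with `a + b ≤ 2‖Φ‖`
  nlinarith [norm_nonneg (Φ x y), norm_nonneg (Φ x' y'), mul_nonneg hδ (norm_nonneg Φ)]

theorem bddAbove_sq_norm_apply_unit :
    BddAbove {r | ∃ x y, ‖x‖ = 1 ∧ ‖y‖ = 1 ∧ r = ‖Φ x y‖ ^ 2} := by
  refine ⟨‖Φ‖ ^ 2, ?_⟩
  rintro _ ⟨x, y, hx, hy, rfl⟩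
  gcongr
  simpa using Φ.le_of_opNorm₂_le_of_le le_rfl hx.le hy.le

theorem sq_opNorm_le_sSup :
    ‖Φ‖ ^ 2 ≤ sSup {r | ∃ x y, ‖x‖ = 1 ∧ ‖y‖ = 1 ∧ r = ‖Φ x y‖ ^ 2} := by
  have hM : 0 ≤ sSup {r | ∃ x y, ‖x‖ = 1 ∧ ‖y‖ = 1 ∧ r = ‖Φ x y‖ ^ 2} :=
    Real.sSup_nonneg <| by rintro _ ⟨x, y, -, -, rfl⟩; positivity
  refine (Real.le_sqrt Φ.opNorm_nonneg hM).mp <|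
    Φ.opNorm_le_of_unit_norm₂ (Real.sqrt_nonneg _) fun x y hx hy ↦ ?_
  exact Real.le_sqrt_of_sq_le <| le_csSup Φ.bddAbove_sq_norm_apply_unit ⟨x, y, hx, hy, rfl⟩

theorem one_sub_mul_sSup_le_sSup_of_net {δ : ℝ} (hδ : 0 ≤ δ) {N₁ : Set E} {N₂ : Set F}
    (hN₁ : ∀ x ∈ N₁, ‖x‖ = 1) (hN₂ : ∀ y ∈ N₂, ‖y‖ = 1)
    (hnet₁ : ∀ x, ‖x‖ = 1 → ∃ x' ∈ N₁, ‖x - x'‖ ≤ δ)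
    (hnet₂ : ∀ y, ‖y‖ = 1 → ∃ y' ∈ N₂, ‖y - y'‖ ≤ δ) :
    (1 - 4 * δ) * sSup {r | ∃ x y, ‖x‖ = 1 ∧ ‖y‖ = 1 ∧ r = ‖Φ x y‖ ^ 2} ≤
      sSup {r | ∃ x ∈ N₁, ∃ y ∈ N₂, r = ‖Φ x y‖ ^ 2} := by
  set M := sSup {r | ∃ x y, ‖x‖ = 1 ∧ ‖y‖ = 1 ∧ r = ‖Φ x y‖ ^ 2}
  set Mnet := sSup {r | ∃ x ∈ N₁, ∃ y ∈ N₂, r = ‖Φ x y‖ ^ 2}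
  have hbdd : BddAbove {r | ∃ x ∈ N₁, ∃ y ∈ N₂, r = ‖Φ x y‖ ^ 2} :=
    Φ.bddAbove_sq_norm_apply_unit.mono <| by
      rintro _ ⟨x, hx, y, hy, rfl⟩
      exact ⟨x, y, hN₁ x hx, hN₂ y hy, rfl⟩
  have hM : 0 ≤ M := (sq_nonneg _).trans Φ.sq_opNorm_le_sSup
  have hMnet : 0 ≤ Mnet := Real.sSup_nonneg <| by rintro _ ⟨x, -, y, -, rfl⟩; positivity
  suffices M ≤ Mnet + 4 * δ * M by linarith
  refine Real.sSup_le ?_ (by positivity)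
  rintro _ ⟨x, y, hx, hy, rfl⟩
  obtain ⟨x', hx'N, hxx'⟩ := hnet₁ x hx
  obtain ⟨y', hy'N, hyy'⟩ := hnet₂ y hy
  calc ‖Φ x y‖ ^ 2 ≤ ‖Φ x' y'‖ ^ 2 + 4 * δ * ‖Φ‖ ^ 2 :=
        Φ.sq_norm_apply_le_of_norm_sub_le hx.le (hN₁ x' hx'N).le hy.le (hN₂ y' hy'N).le hxx' hyy'
    _ ≤ Mnet + 4 * δ * M := by
        gcongr
        · exact le_csSup hbdd ⟨x', hx'N, y', hy'N, rfl⟩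
        · exact Φ.sq_opNorm_le_sSup

end ContinuousLinearMap

open WithLp

namespace EuclideanSpace

variable {𝕜 m n : Type*} [RCLike 𝕜] [Fintype m] [Fintype n]

noncomputable def kronCLM :
    EuclideanSpace 𝕜 m →L[𝕜] EuclideanSpace 𝕜 n →L[𝕜] EuclideanSpace 𝕜 (m × n) :=
  LinearMap.toContinuousLinearMap <| LinearMap.toContinuousLinearMap.toLinearMap ∘ₗ
    LinearMap.mk₂ 𝕜 (fun x y ↦ toLp 2 fun p : m × n ↦ x p.1 * y p.2)
      (fun _ _ _ ↦ by ext; simp [add_mul]) (fun _ _ _ ↦ by ext; simp [mul_assoc])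
      (fun _ _ _ ↦ by ext; simp [mul_add]) (fun _ _ _ ↦ by ext; simp [mul_left_comm])

end EuclideanSpace

theorem Matrix.re_star_dotProduct_conjTranspose_mul_mulVec {𝕜 l n : Type*} [RCLike 𝕜]
    [Fintype l] [Fintype n] (B : Matrix l n 𝕜) (v : n → 𝕜) :
    RCLike.re (star v ⬝ᵥ (Bᴴ * B) *ᵥ v) = ‖toLp 2 (B *ᵥ v)‖ ^ 2 := by
  rw [← mulVec_mulVec, dotProduct_mulVec, vecMul_conjTranspose,
    star_star, @norm_sq_eq_re_inner 𝕜, EuclideanSpace.inner_toLp_toLp, dotProduct_comm]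

theorem net_overlap_ge_general {d : ℕ}
    (ρ : Matrix (Fin d × Fin d) (Fin d × Fin d) ℂ) (hρ : ρ.PosSemidef)
    (δ : ℝ) (hδ0 : 0 < δ)
    (N : Finset (EuclideanSpace ℂ (Fin d)))
    (hNunit : ∀ x ∈ N, ‖x‖ = 1)
    (hNnet : ∀ x : EuclideanSpace ℂ (Fin d), ‖x‖ = 1 → ∃ y ∈ N, ‖x - y‖ ≤ δ) :
    sSup { r | ∃ x ∈ N, ∃ y ∈ N,
        r = ((star (fun p : Fin d × Fin d => x p.1 * y p.2)) ⬝ᵥ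
              (ρ *ᵥ (fun p : Fin d × Fin d => x p.1 * y p.2))).re } ≥
      (1 - 4 * δ) *
        sSup { r | ∃ x y : EuclideanSpace ℂ (Fin d), ‖x‖ = 1 ∧ ‖y‖ = 1 ∧
            r = ((star (fun p : Fin d × Fin d => x p.1 * y p.2)) ⬝ᵥ
                  (ρ *ᵥ (fun p : Fin d × Fin d => x p.1 * y p.2))).re } := by
  obtain ⟨B, rfl⟩ : ∃ B, ρ = Bᴴ * B := by
    open scoped MatrixOrder in exact CStarAlgebra.nonneg_iff_eq_star_mul_self.mp hρ.nonneg
  let Φ :=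
    (ContinuousLinearMap.compL ℂ _ _ _ (toEuclideanCLM (𝕜 := ℂ) B)).comp EuclideanSpace.kronCLM
  have hΦ (x y : EuclideanSpace ℂ (Fin d)) :
      (star (fun p : Fin d × Fin d => x p.1 * y p.2) ⬝ᵥ
        ((Bᴴ * B) *ᵥ fun p : Fin d × Fin d => x p.1 * y p.2)).re = ‖Φ x y‖ ^ 2 :=
    B.re_star_dotProduct_conjTranspose_mul_mulVec _
  simp only [hΦ]
  exact Φ.one_sub_mul_sSup_le_sSup_of_net hδ0.le hNunit hNunit hNnet hNnet

/-- Net approximation of the maximal product overlap: if N_δ is a δ-net of unit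
vectors of ℂ^d (0 < δ < 1/8) and ρ ⪰ 0, then
max over net pairs of ⟨x⊗y|ρ|x⊗y⟩ is at least (1 − 4δ) times the supremum
over all unit vector pairs. -/
theorem net_overlap_ge {d : ℕ} (hd : 0 < d)
    (ρ : Matrix (Fin d × Fin d) (Fin d × Fin d) ℂ) (hρ : ρ.PosSemidef)
    (δ : ℝ) (hδ0 : 0 < δ) (hδ : δ < 1 / 8)
    (N : Finset (EuclideanSpace ℂ (Fin d)))
    (hNunit : ∀ x ∈ N, ‖x‖ = 1)
    (hNnet : ∀ x : EuclideanSpace ℂ (Fin d), ‖x‖ = 1 → ∃ y ∈ N, ‖x - y‖ ≤ δ) :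
    sSup { r | ∃ x ∈ N, ∃ y ∈ N,
        r = ((star (fun p : Fin d × Fin d => x p.1 * y p.2)) ⬝ᵥ
              (ρ *ᵥ (fun p : Fin d × Fin d => x p.1 * y p.2))).re } ≥
      (1 - 4 * δ) *
        sSup { r | ∃ x y : EuclideanSpace ℂ (Fin d), ‖x‖ = 1 ∧ ‖y‖ = 1 ∧
            r = ((star (fun p : Fin d × Fin d => x p.1 * y p.2)) ⬝ᵥ
                  (ρ *ᵥ (fun p : Fin d × Fin d => x p.1 * y p.2))).re } :=
  net_overlap_ge_general ρ hρ δ hδ0 N hNunit hNnet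
end

section
/- The reduced state of the normalized antisymmetric projector α_{A^n} on (ℂ^d)^{⊗n} (n ≤ d) obtained by tracing out the last n − k subsystems equals the normalized antisymmetric projector α_{A^k} on (ℂ^d)^{⊗k}. -/
open Matrix

/-- The unitary permuting the tensor factors of (ℂ^d)^{⊗n} according to π,
as a matrix indexed by the product basis Fin n → Fin d. -/
noncomputable def permMatrix (d n : ℕ) (π : Equiv.Perm (Fin n)) :
    Matrix (Fin n → Fin d) (Fin n → Fin d) ℂ :=
  fun f g => if f ∘ π = g then 1 else 0

/-- The orthogonal projector onto the antisymmetric subspace of (ℂ^d)^{⊗n}: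
the antisymmetrizer (1/n!) ∑_π sgn(π) U_π. -/
noncomputable def antisymProj (d n : ℕ) : Matrix (Fin n → Fin d) (Fin n → Fin d) ℂ :=
  ((n.factorial : ℂ))⁻¹ •
    ∑ π : Equiv.Perm (Fin n), (((Equiv.Perm.sign π : ℤ) : ℂ)) • permMatrix d n π

/-- The antisymmetric state α_{A^n}: the normalized projector onto the
antisymmetric subspace of (ℂ^d)^{⊗n}. -/
noncomputable def antisymState (d n : ℕ) : Matrix (Fin n → Fin d) (Fin n → Fin d) ℂ :=
  ((antisymProj d n).trace)⁻¹ • antisymProj d n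

/-- The partial trace over the last m tensor factors of an operator on
(ℂ^d)^{⊗(k+m)}. -/
noncomputable def ptraceLast (d k m : ℕ)
    (M : Matrix (Fin (k + m) → Fin d) (Fin (k + m) → Fin d) ℂ) :
    Matrix (Fin k → Fin d) (Fin k → Fin d) ℂ :=
  fun f g => ∑ h : Fin m → Fin d, M (Fin.append f h) (Fin.append g h)

/-!
The antisymmetrizer has entries `P(a, b) = det [a i = b j] / n!`. If `(f, h)` is injective, the
coincidence matrix of `(f, h)` against `(g, h)` is block lower triangular with an identity block
on `h`, so its determinant is `det [f i = g j]`; otherwise it vanishes. Summing over the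
`(d - k)(d - k - 1)⋯(d - k - m + 1)` injective extensions `h` of `f` shows that tracing out `m`
factors of `P_{k+m}` gives a scalar multiple of `P_k`. As the partial trace preserves the trace,
the normalizations then agree automatically.
-/

open Function
open scoped Nat

section Coincidence

variable {ι κ α R : Type*} [DecidableEq α] [CommRing R]

variable (R) in
def coincidenceMatrix (a : ι → α) (b : κ → α) : Matrix ι κ R :=
  of fun i j => if a i = b j then 1 else 0

lemma det_coincidenceMatrix_of_not_injective [Fintype ι] [DecidableEq ι] {a : ι → α}
    (b : ι → α) (ha : ¬ Injective a) : det (coincidenceMatrix R a b) = 0 := by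
  obtain ⟨i, j, hij, hne⟩ : ∃ i j, a i = a j ∧ i ≠ j := by
    simpa [Injective] using ha
  exact det_zero_of_row_eq hne (funext fun l => by simp [coincidenceMatrix, hij])

lemma coincidenceMatrix_self [DecidableEq ι] {a : ι → α} (ha : Injective a) :
    coincidenceMatrix R a a = 1 := by
  ext i j
  simp [coincidenceMatrix, one_apply, ha.eq_iff]

lemma det_coincidenceMatrix_self [Fintype ι] [DecidableEq ι] (a : ι → α) :
    det (coincidenceMatrix R a a) = if Injective a then 1 else 0 := by
  split_ifs with ha
  · rw [coincidenceMatrix_self ha, det_one]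
  · exact det_coincidenceMatrix_of_not_injective a ha

lemma det_coincidenceMatrix_comp_equiv [Fintype ι] [DecidableEq ι] [Fintype κ] [DecidableEq κ]
    (a b : ι → α) (e : κ ≃ ι) :
    det (coincidenceMatrix R (a ∘ e) (b ∘ e)) = det (coincidenceMatrix R a b) :=
  det_submatrix_equiv_self e (coincidenceMatrix R a b)

lemma coincidenceMatrix_sumElim (f g : ι → α) (h : κ → α) :
    coincidenceMatrix R (Sum.elim f h) (Sum.elim g h) =
      fromBlocks (coincidenceMatrix R f g) (coincidenceMatrix R f h)
        (coincidenceMatrix R h g) (coincidenceMatrix R h h) := by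
  ext (i | i) (j | j) <;> rfl

lemma det_coincidenceMatrix_sumElim [Fintype ι] [DecidableEq ι] [Fintype κ] [DecidableEq κ]
    (f g : ι → α) (h : κ → α) :
    det (coincidenceMatrix R (Sum.elim f h) (Sum.elim g h)) =
      if Injective (Sum.elim f h) then det (coincidenceMatrix R f g) else 0 := by
  split_ifs with hinj
  · obtain ⟨-, hh, hfh⟩ := Sum.elim_injective.mp hinj
    have hzero : coincidenceMatrix R f h = 0 := by
      ext i j
      simp [coincidenceMatrix, hfh i j]
    rw [coincidenceMatrix_sumElim, hzero, coincidenceMatrix_self hh, det_fromBlocks_zero₁₂,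
      det_one, mul_one]
  · exact det_coincidenceMatrix_of_not_injective _ hinj

lemma card_injective_sumElim [Fintype ι] [Fintype κ] [DecidableEq κ] [Fintype α] {f : ι → α}
    (hf : Injective f) :
    Fintype.card {h : κ → α // Injective (Sum.elim f h)} =
      (Fintype.card α - Fintype.card ι).descFactorial (Fintype.card κ) := by
  have e : {h : κ → α // Injective (Sum.elim f h)} ≃ (κ ↪ ↥(Set.range f)ᶜ) :=
    { toFun := fun h =>
        ⟨fun j => ⟨h.1 j, by rintro ⟨i, hi⟩; exact (Sum.elim_injective.mp h.2).2.2 i j hi⟩,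
          fun j j' hjj => (Sum.elim_injective.mp h.2).2.1 (congrArg Subtype.val hjj)⟩
      invFun := fun e => ⟨fun j => e j, Sum.elim_injective.mpr
          ⟨hf, fun j j' hjj => e.injective (Subtype.ext hjj), fun i j hij => (e j).2 ⟨i, hij⟩⟩⟩
      left_inv := fun _ => rfl
      right_inv := fun _ => rfl }
  rw [Fintype.card_congr e, Fintype.card_embedding_eq, Fintype.card_compl_set,
    Set.card_range_of_injective hf]

lemma sum_det_coincidenceMatrix_sumElim [Fintype ι] [DecidableEq ι] [Fintype κ] [DecidableEq κ]
    [Fintype α] (f g : ι → α) :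
    ∑ h : κ → α, det (coincidenceMatrix R (Sum.elim f h) (Sum.elim g h)) =
      (Fintype.card α - Fintype.card ι).descFactorial (Fintype.card κ) *
        det (coincidenceMatrix R f g) := by
  simp_rw [det_coincidenceMatrix_sumElim, Finset.sum_ite, Finset.sum_const_zero, add_zero,
    Finset.sum_const, nsmul_eq_mul, ← Fintype.card_subtype]
  by_cases hf : Injective f
  · rw [card_injective_sumElim hf]
  · rw [det_coincidenceMatrix_of_not_injective g hf, mul_zero, mul_zero]

lemma det_coincidenceMatrix_append {k m : ℕ} (f g : Fin k → α) (h : Fin m → α) :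
    det (coincidenceMatrix R (Fin.append f h) (Fin.append g h)) =
      det (coincidenceMatrix R (Sum.elim f h) (Sum.elim g h)) := by
  have happend (u : Fin k → α) : Fin.append u h ∘ finSumFinEquiv = Sum.elim u h := by
    ext (i | j) <;> simp
  rw [← det_coincidenceMatrix_comp_equiv _ _ finSumFinEquiv, happend, happend]

end Coincidence

section PartialTrace

variable {d k m : ℕ}

lemma ptraceLast_smul (c : ℂ) (M : Matrix (Fin (k + m) → Fin d) (Fin (k + m) → Fin d) ℂ) :
    ptraceLast d k m (c • M) = c • ptraceLast d k m M := by
  ext f g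
  simp [ptraceLast, Finset.mul_sum]

lemma trace_ptraceLast (M : Matrix (Fin (k + m) → Fin d) (Fin (k + m) → Fin d) ℂ) :
    trace (ptraceLast d k m M) = trace M := by
  simp only [trace, diag, ptraceLast]
  rw [← Fintype.sum_prod_type', ← (Fin.appendEquiv k m).sum_comp]
  rfl

lemma ptraceLast_normalize {M : Matrix (Fin (k + m) → Fin d) (Fin (k + m) → Fin d) ℂ}
    {N : Matrix (Fin k → Fin d) (Fin k → Fin d) ℂ} {c : ℂ} (hM : trace M ≠ 0)
    (hMN : ptraceLast d k m M = c • N) :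
    ptraceLast d k m ((trace M)⁻¹ • M) = (trace N)⁻¹ • N := by
  have htrace : trace M = c * trace N := by
    rw [← trace_ptraceLast, hMN, trace_smul, smul_eq_mul]
  have hc : c ≠ 0 := left_ne_zero_of_mul (htrace ▸ hM)
  rw [ptraceLast_smul, hMN, smul_smul, htrace, mul_inv, mul_right_comm, inv_mul_cancel₀ hc,
    one_mul]

end PartialTrace

lemma antisymProj_apply (d n : ℕ) (a b : Fin n → Fin d) :
    antisymProj d n a b = (n ! : ℂ)⁻¹ * det (coincidenceMatrix ℂ a b) := by
  have hprod (π : Equiv.Perm (Fin n)) :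
      ∏ i, coincidenceMatrix ℂ a b (π i) i = if a ∘ π = b then 1 else 0 := by
    simp [coincidenceMatrix, Finset.prod_boole, funext_iff]
  simp [antisymProj, permMatrix, det_apply, Matrix.sum_apply, hprod, Units.smul_def]

lemma trace_antisymProj (d n : ℕ) : trace (antisymProj d n) = (n ! : ℂ)⁻¹ * d.descFactorial n := by
  simp_rw [trace, diag, antisymProj_apply, det_coincidenceMatrix_self, ← Finset.mul_sum,
    Finset.sum_boole, ← Fintype.card_subtype,
    Fintype.card_congr (Equiv.subtypeInjectiveEquivEmbedding (Fin n) (Fin d)),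
    Fintype.card_embedding_eq, Fintype.card_fin]

lemma ptraceLast_antisymProj (d k m : ℕ) :
    ptraceLast d k m (antisymProj d (k + m)) =
      (((k + m) ! : ℂ)⁻¹ * k ! * (d - k).descFactorial m) • antisymProj d k := by
  have hk : (k ! : ℂ) ≠ 0 := by exact_mod_cast k.factorial_ne_zero
  ext f g
  simp_rw [ptraceLast, Matrix.smul_apply, antisymProj_apply, ← Finset.mul_sum,
    det_coincidenceMatrix_append, sum_det_coincidenceMatrix_sumElim, smul_eq_mul,
    Fintype.card_fin]
  field_simp

lemma trace_antisymProj_ne_zero {d n : ℕ} (h : n ≤ d) : trace (antisymProj d n) ≠ 0 := by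
  rw [trace_antisymProj]
  exact mul_ne_zero (inv_ne_zero (by exact_mod_cast n.factorial_ne_zero))
    (by exact_mod_cast (Nat.descFactorial_pos.mpr h).ne')

/-- Tracing out the last m subsystems of the antisymmetric state on (ℂ^d)^{⊗(k+m)}
(with k + m ≤ d) yields the antisymmetric state on (ℂ^d)^{⊗k}. -/
theorem ptrace_antisymState (d k m : ℕ) (h : k + m ≤ d) :
    ptraceLast d k m (antisymState d (k + m)) = antisymState d k :=
  ptraceLast_normalize (trace_antisymProj_ne_zero h) (ptraceLast_antisymProj d k m)
end

section
/- For a pure tripartite state ψ on H_A ⊗ H_B ⊗ H_C with reduced states ρ_AB, ρ_AC, suppose E_F(ψ_{A:BC}) = E_F(ρ_{A:B}) + G(ρ_{AC}) holds for a nonnegative, jointly convex functional G with G(ρ_AC) ≥ E(ρ_{A:C}) for some convex E vanishing only appropriately. Then for any mixed state ρ_ABC, convexity of E_F and joint convexity of G imply E_F(ρ_{A:BC}) ≥ E_F(ρ_{A:B}) + E(ρ_{A:C}) where the infimum over pure-state decompositions achieving E_F(ρ_{A:BC}) is used. -/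
/-!
Average the Koashi–Winter identity over the optimal decomposition. Convexity of `E_F` bounds
`E_F(ρ_{A:B})` by the average of `E_F(ψᵢ_{A:B})`, and joint convexity of `S_M` bounds
`S_M(ρ_{A:C} ‖ ∑ᵢ pᵢ τᵢ)` by the average of `S_M(ψᵢ_{A:C} ‖ τᵢ)`. Since `∑ᵢ pᵢ τᵢ` is separable,
the latter dominates the relative entropy of entanglement of `ρ_{A:C}`.
-/

open Finset

/-- The paper's `M`-filtered relative entropy of entanglement `E_{R,M}`. -/
noncomputable def relEntropyOfEntanglement {X : Type*} (SM : X → X → ℝ) (Sep : Set X) (η : X) :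
    ℝ :=
  sInf {r | ∃ σ ∈ Sep, r = SM η σ}

theorem relEntropyOfEntanglement_le {X : Type*} {SM : X → X → ℝ} {Sep : Set X} {η σ : X}
    (hSM0 : ∀ σ ∈ Sep, 0 ≤ SM η σ) (hσ : σ ∈ Sep) :
    relEntropyOfEntanglement SM Sep η ≤ SM η σ :=
  csInf_le ⟨0, fun _ ⟨σ', hσ', hr⟩ => hr ▸ hSM0 σ' hσ'⟩ ⟨σ, hσ, rfl⟩

theorem convex_roof_monogamy_general
    {V W X : Type*} [AddCommGroup V] [Module ℝ V]
    [AddCommGroup W] [Module ℝ W] [AddCommGroup X] [Module ℝ X]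
    (mAB : V →ₗ[ℝ] W) (mAC : V →ₗ[ℝ] X)
    (EFtri : V → ℝ) (EF : W → ℝ) (SM : X → X → ℝ)
    (Sep : Set X)
    (N : ℕ) (p : Fin N → ℝ) (ψ : Fin N → V) (τ : Fin N → X)
    (ρ : V)
    (hρ : ρ = ∑ i, p i • ψ i)
    -- the decomposition achieves the convex roof E_F(ρ_{A:BC})
    (hroof : EFtri ρ = ∑ i, p i * EFtri (ψ i))
    -- Koashi–Winter identity on each pure state, with τᵢ = ρᵢ_A ⊗ ρᵢ_C
    (hKW : ∀ i, EFtri (ψ i) = EF (mAB (ψ i)) + SM (mAC (ψ i)) (τ i))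
    -- the separable set is convex
    (hSepConv : (∑ i, p i • τ i) ∈ Sep)
    -- convexity of E_F
    (hEFconv : ∀ (x : Fin N → W), EF (∑ i, p i • x i) ≤ ∑ i, p i * EF (x i))
    -- joint convexity of S_M
    (hSMconv : ∀ (x y : Fin N → X),
      SM (∑ i, p i • x i) (∑ i, p i • y i) ≤ ∑ i, p i * SM (x i) (y i))
    -- nonnegativity of S_M against separable states (so the infimum exists)
    (hSM0 : ∀ σ ∈ Sep, 0 ≤ SM (mAC ρ) σ) :
    EFtri ρ ≥ EF (mAB ρ) + sInf { r | ∃ σ ∈ Sep, r = SM (mAC ρ) σ } := by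
  have hAB : mAB ρ = ∑ i, p i • mAB (ψ i) := by simp only [hρ, map_sum, map_smul]
  have hAC : mAC ρ = ∑ i, p i • mAC (ψ i) := by simp only [hρ, map_sum, map_smul]
  calc EF (mAB ρ) + relEntropyOfEntanglement SM Sep (mAC ρ)
      ≤ EF (mAB ρ) + SM (mAC ρ) (∑ i, p i • τ i) :=
        add_le_add_right (relEntropyOfEntanglement_le hSM0 hSepConv) _
    _ ≤ ∑ i, p i * EF (mAB (ψ i)) + ∑ i, p i * SM (mAC (ψ i)) (τ i) := by
        rw [hAB, hAC]
        exact add_le_add (hEFconv _) (hSMconv _ _)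
    _ = EFtri ρ := by simp only [hroof, hKW, mul_add, sum_add_distrib]

/-- Abstract convex-roof argument (Koashi–Winter chaining): suppose the tripartite
state ρ decomposes as ρ = ∑ᵢ pᵢ ψᵢ into pure states achieving the convex roof,
E_F(ρ_{A:BC}) = ∑ᵢ pᵢ E_F(ψᵢ), and for each pure ψᵢ the identity
E_F(ψᵢ) = E_F(mAB ψᵢ) + S_M(mAC ψᵢ ‖ τᵢ) holds with τᵢ = ρᵢ_A ⊗ ρᵢ_C separable.
If E_F is convex, S_M is jointly convex and nonnegative on separable second
arguments, and the separable set is convex (∑ᵢ pᵢ τᵢ separable), then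
E_F(ρ_{A:BC}) ≥ E_F(ρ_{A:B}) + E_{R,M}(ρ_{A:C}), where
E_{R,M}(η) = inf { S_M(η ‖ σ) : σ separable }. -/
theorem convex_roof_monogamy
    {V W X : Type*} [AddCommGroup V] [Module ℝ V]
    [AddCommGroup W] [Module ℝ W] [AddCommGroup X] [Module ℝ X]
    (mAB : V →ₗ[ℝ] W) (mAC : V →ₗ[ℝ] X)
    (EFtri : V → ℝ) (EF : W → ℝ) (SM : X → X → ℝ)
    (Sep : Set X)
    (N : ℕ) (p : Fin N → ℝ) (ψ : Fin N → V) (τ : Fin N → X)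
    (ρ : V)
    (hp : ∀ i, 0 ≤ p i) (hp1 : ∑ i, p i = 1)
    (hρ : ρ = ∑ i, p i • ψ i)
    -- the decomposition achieves the convex roof E_F(ρ_{A:BC})
    (hroof : EFtri ρ = ∑ i, p i * EFtri (ψ i))
    -- Koashi–Winter identity on each pure state, with τᵢ = ρᵢ_A ⊗ ρᵢ_C
    (hKW : ∀ i, EFtri (ψ i) = EF (mAB (ψ i)) + SM (mAC (ψ i)) (τ i))
    (hτ : ∀ i, τ i ∈ Sep)
    -- the separable set is convex
    (hSepConv : (∑ i, p i • τ i) ∈ Sep)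
    -- convexity of E_F
    (hEFconv : ∀ (x : Fin N → W), EF (∑ i, p i • x i) ≤ ∑ i, p i * EF (x i))
    -- joint convexity of S_M
    (hSMconv : ∀ (x y : Fin N → X),
      SM (∑ i, p i • x i) (∑ i, p i • y i) ≤ ∑ i, p i * SM (x i) (y i))
    -- nonnegativity of S_M against separable states (so the infimum exists)
    (hSM0 : ∀ σ ∈ Sep, 0 ≤ SM (mAC ρ) σ) :
    EFtri ρ ≥ EF (mAB ρ) + sInf { r | ∃ σ ∈ Sep, r = SM (mAC ρ) σ } :=
  convex_roof_monogamy_general mAB mAC EFtri EF SM Sep N p ψ τ ρ hρ hroof hKW hSepConv hEFconv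
    hSMconv hSM0
end
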